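/- arXiv:2206.00333 — 7 statements merged into one kernel-verified Lean document; each statement's English description precedes it below -/
import Mathlib

section
/- Let σ : A* → B* be a return morphism for two distinct words w and w' with |w| ≤ |w'|. Then for every prefix u of w' with |u| ≥ |w|, the morphism σ is also a return morphism for u. -/
noncomputable def occCount {B : Type*} (u w : List B) : ℕ :=
  {i : ℕ | i ≤ w.length ∧ u <+: w.drop i}.ncard

/-- `σ` is a return morphism for the nonempty word `w`: it is injective (as a morphism on
words) and for every letter `a`, the word `σ(a)w` contains exactly two occurrences of `w`,
one as a proper prefix and one as a proper suffix. -/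
def IsReturnMorphism {A B : Type*} (σ : A → List B) (w : List B) : Prop :=
  w ≠ [] ∧ Function.Injective (fun v : List A => (v.map σ).flatten) ∧
    ∀ a : A, σ a ≠ [] ∧ w <+: σ a ++ w ∧ occCount w (σ a ++ w) = 2

/-!
If `u` is a prefix of `w'` and `w'` is a prefix of `σ(a)w'`, then `u` is a prefix of `σ(a)u`.
So `w` and `u` are both prefixes of the periodic word `σ(a)^ω`, and `|w| ≤ |u|` makes `w` a prefix
of `u`. An occurrence of `u` in `σ(a)u` strictly inside `σ(a)` then yields an occurrence of `w` in
`σ(a)w` at the same position, which the return property of `w` forbids.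
-/

namespace List

variable {B : Type*} {s t u w : List B}

theorem IsPrefix.prefix_append_self (hu : u <+: w) (hw : w <+: s ++ w) : u <+: s ++ u :=
  prefix_of_prefix_length_le (hu.trans hw) (prefix_append_right_inj s |>.mpr hu) (by simp)

theorem IsPrefix.prefix_append_of_prefix_append (hwu : w <+: u) (h : w <+: t ++ u) :
    w <+: t ++ w :=
  prefix_of_prefix_length_le h (prefix_append_right_inj t |>.mpr hwu) (by simp)

/-- Both words are prefixes of the periodic word `s^ω`. -/
theorem prefix_of_prefix_append_self {s x y : List B} (hs : s ≠ []) (hx : x <+: s ++ x)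
    (hy : y <+: s ++ y) (hxy : x.length ≤ y.length) : x <+: y := by
  induction hn : x.length using Nat.strong_induction_on generalizing x y with
  | _ n ih =>
    by_cases hxs : x.length ≤ s.length
    · have hxs : x <+: s := prefix_of_prefix_length_le hx (prefix_append s x) hxs
      exact prefix_of_prefix_length_le (hxs.trans (prefix_append s y)) hy hxy
    · obtain ⟨x₁, rfl⟩ := prefix_of_prefix_length_le (prefix_append s x) hx (not_le.mp hxs).le
      obtain ⟨y₁, rfl⟩ := prefix_of_prefix_length_le (prefix_append s y) hy
        (by simp only [length_append] at hxy ⊢; omega)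
      rw [prefix_append_right_inj] at hx hy ⊢
      rw [length_append, length_append, Nat.add_le_add_iff_left] at hxy
      exact ih x₁.length (by simp [← hn, length_pos_iff.mpr hs]) hx hy hxy rfl

end List

open List

theorem occCount_append_self (s w : List B) :
    occCount w (s ++ w) = {i | i ≤ s.length ∧ w <+: s.drop i ++ w}.ncard := by
  unfold occCount
  congr 1
  ext i
  constructor
  · rintro ⟨hi_le, hi⟩
    have his : i ≤ s.length := by
      have := hi.length_le
      simp only [length_drop, length_append] at this hi_le
      omega
    exact ⟨his, drop_append_of_le_length his ▸ hi⟩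
  · rintro ⟨his, hi⟩
    exact ⟨by simp only [length_append]; omega, (drop_append_of_le_length his).symm ▸ hi⟩

theorem occCount_append_self_eq_two_iff {B : Type*} {s w : List B} (hs : s ≠ []) (hw : w <+: s ++ w) :
    occCount w (s ++ w) = 2 ↔ ∀ i, 0 < i → i < s.length → ¬ w <+: s.drop i ++ w := by
  rw [occCount_append_self]
  set T := {i | i ≤ s.length ∧ w <+: s.drop i ++ w}
  have h0s : (0 : ℕ) ≠ s.length := (length_pos_iff.mpr hs).ne
  have hsub : {0, s.length} ⊆ T := by
    rintro i (rfl | rfl)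
    · exact ⟨Nat.zero_le _, by simpa using hw⟩
    · simp [T]
  have hT : T.Finite := (Set.finite_Iic s.length).subset fun i hi => hi.1
  constructor
  · intro h2 i hi0 his hi
    have h3 : insert i {0, s.length} ⊆ T := Set.insert_subset ⟨his.le, hi⟩ hsub
    have := Set.ncard_le_ncard h3 hT
    rw [h2, Set.ncard_insert_of_notMem (by simp only [Set.mem_insert_iff, Set.mem_singleton_iff]; omega), Set.ncard_pair h0s] at this
    omega
  · intro h
    suffices T = {0, s.length} by rw [this, Set.ncard_pair h0s]
    refine Set.Subset.antisymm (fun i ⟨his, hi⟩ => ?_) hsub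
    by_contra hne
    simp only [Set.mem_insert_iff, Set.mem_singleton_iff, not_or] at hne
    exact h i (Nat.pos_of_ne_zero hne.1) (lt_of_le_of_ne his hne.2) hi

theorem stmt_1_general {A B : Type*} (σ : A → List B) (w w' : List B)
    (hw : IsReturnMorphism σ w) (hw' : IsReturnMorphism σ w') :
    ∀ u : List B, u <+: w' → w.length ≤ u.length → IsReturnMorphism σ u := by
  intro u hu hwu
  obtain ⟨hw_ne, hinj, hwσ⟩ := hw
  refine ⟨ne_nil_of_length_pos ((length_pos_iff.mpr hw_ne).trans_le hwu), hinj, fun a => ?_⟩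
  obtain ⟨hσa, hwa, hcount⟩ := hwσ a
  have hua : u <+: σ a ++ u := hu.prefix_append_self (hw'.2.2 a).2.1
  have hw_u : w <+: u := prefix_of_prefix_append_self hσa hwa hua hwu
  refine ⟨hσa, hua, (occCount_append_self_eq_two_iff hσa hua).2 fun i hi0 his hi => ?_⟩
  exact (occCount_append_self_eq_two_iff hσa hwa).1 hcount i hi0 his
    (hw_u.prefix_append_of_prefix_append (hw_u.trans hi))

/-- If `σ` is a return morphism for two distinct words `w` and `w'` with `|w| ≤ |w'|`,
then `σ` is a return morphism for every prefix `u` of `w'` of length at least `|w|`. -/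
theorem stmt_1 {A B : Type*} (σ : A → List B) (w w' : List B)
    (hw : IsReturnMorphism σ w) (hw' : IsReturnMorphism σ w')
    (hne : w ≠ w') (hlen : w.length ≤ w'.length) :
    ∀ u : List B, u <+: w' → w.length ≤ u.length → IsReturnMorphism σ u :=
  stmt_1_general σ w w' hw hw'
end

section
/- Let σ : A* → B* be a return morphism for two distinct words w and w' with |w| ≤ |w'|, and let X be a shift space over A. Then w is not right special in the language of σ·X, i.e., there is exactly one letter b ∈ B with wb in the language of σ·X. -/
def shiftMap {A : Type*} (x : ℤ → A) : ℤ → A := fun n => x (n + 1)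

/-- `u` occurs as a factor of the bi-infinite word `x`. -/
def FactorOf {A : Type*} (u : List A) (x : ℤ → A) : Prop :=
  ∃ i : ℤ, ∀ k : Fin u.length, x (i + ((k : ℕ) : ℤ)) = u.get k

/-- The language of a set of bi-infinite words. -/
def lang {A : Type*} (X : Set (ℤ → A)) : Set (List A) := {u | ∃ x ∈ X, FactorOf u x}

/-- A (nonempty) shift space: a nonempty, closed, shift-invariant subset of `A^ℤ`. -/
def IsShiftSpace {A : Type*} [TopologicalSpace A] (X : Set (ℤ → A)) : Prop :=
  X.Nonempty ∧ IsClosed X ∧ shiftMap '' X = X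

/-- The language of the image shift `σ · X`: the factors of the images under `σ`
of the words of the language of `X`. -/
def imageLang {A B : Type*} (σ : A → List B) (X : Set (ℤ → A)) : Set (List B) :=
  {u | ∃ v ∈ lang X, u <:+: (v.map σ).flatten}

lemma List.existsUnique_append_singleton_prefix {B : Type*} {w w' : List B} (h : w <+: w')
    (hlt : w.length < w'.length) : ∃! b : B, w ++ [b] <+: w' := by
  obtain ⟨r, rfl⟩ := h
  obtain ⟨b, r', rfl⟩ : ∃ b r', r = b :: r' :=
    List.exists_cons_of_ne_nil (by rintro rfl; simp at hlt)
  exact ⟨b, by simp, fun c hc => by simpa using hc⟩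

lemma exists_mem_lang_length_eq {A : Type*} {X : Set (ℤ → A)} (hX : X.Nonempty) (n : ℕ) :
    ∃ v ∈ lang X, v.length = n := by
  obtain ⟨x, hx⟩ := hX
  exact ⟨List.ofFn fun k : Fin n => x k, ⟨x, hx, 0, fun k => by simp⟩, List.length_ofFn⟩

namespace IsReturnMorphism

variable {A B : Type*} {σ : A → List B} {w : List B}

lemma prefix_flatten_append (hw : IsReturnMorphism σ w) (v : List A) :
    w <+: (v.map σ).flatten ++ w := by
  induction v with
  | nil => simp
  | cons a v ih =>
    obtain ⟨t, ht⟩ := ih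
    have h : w <+: σ a ++ w ++ t := (hw.2.2 a).2.1.trans (List.prefix_append _ _)
    simpa [← ht] using h

lemma length_le_length_flatten (hw : IsReturnMorphism σ w) (v : List A) :
    v.length ≤ (v.map σ).flatten.length := by
  induction v with
  | nil => simp
  | cons a v ih =>
    have := List.length_pos_iff.mpr (hw.2.2 a).1
    simp only [List.map_cons, List.flatten_cons, List.length_append, List.length_cons]
    omega

lemma prefix_flatten (hw : IsReturnMorphism σ w) {v : List A} (h : w.length ≤ v.length) :
    w <+: (v.map σ).flatten :=
  List.prefix_of_prefix_length_le (hw.prefix_flatten_append v) (List.prefix_append _ _)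
    (h.trans (hw.length_le_length_flatten v))

lemma eq_zero_or_eq_length_of_prefix_drop (hw : IsReturnMorphism σ w) (a : A) {i : ℕ}
    (hi : i ≤ (σ a ++ w).length) (h : w <+: (σ a ++ w).drop i) : i = 0 ∨ i = (σ a).length := by
  obtain ⟨hane, hpre, hocc⟩ := hw.2.2 a
  set occ := {i : ℕ | i ≤ (σ a ++ w).length ∧ w <+: (σ a ++ w).drop i}
  have hsub : ({0, (σ a).length} : Set ℕ) ⊆ occ := by
    rintro _ (rfl | rfl)
    · exact ⟨Nat.zero_le _, hpre⟩
    · exact ⟨by simp, by rw [List.drop_left]⟩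
  have hfin : occ.Finite := (Set.finite_Iic _).subset fun _ hj => hj.1
  have hcard : occ.ncard ≤ ({0, (σ a).length} : Set ℕ).ncard := by
    rw [Set.ncard_pair (List.length_pos_iff.mpr hane).ne]
    exact hocc.le
  have hmem : i ∈ ({0, (σ a).length} : Set ℕ) := by
    rw [Set.eq_of_subset_of_ncard_le hsub hcard hfin]
    exact ⟨hi, h⟩
  simpa using hmem

/-- Synchronization: in `σ(a)w` the word `w` occurs only at the block boundaries `0` and `|σ(a)|`,
so every occurrence of `w` in `σ(v)w` starts at a boundary between blocks. -/
lemma exists_eq_append_of_prefix_drop (hw : IsReturnMorphism σ w) (v : List A) {i : ℕ}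
    (hi : i ≤ (v.map σ).flatten.length) (h : w <+: ((v.map σ).flatten ++ w).drop i) :
    ∃ v₁ v₂ : List A, v = v₁ ++ v₂ ∧ i = (v₁.map σ).flatten.length := by
  induction v generalizing i with
  | nil => exact ⟨[], [], rfl, by simpa using hi⟩
  | cons a v ih =>
    simp only [List.map_cons, List.flatten_cons, List.length_append] at hi h
    by_cases hai : (σ a).length ≤ i
    · rw [List.append_assoc, List.drop_append, List.drop_eq_nil_of_le hai,
        List.nil_append] at h
      obtain ⟨v₁, v₂, rfl, hv₁⟩ := ih (by omega) h
      refine ⟨a :: v₁, v₂, rfl, ?_⟩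
      simp only [List.map_cons, List.flatten_cons, List.length_append]
      omega
    · obtain ⟨t, ht⟩ := hw.prefix_flatten_append v
      have hle : i ≤ (σ a ++ w).length := by simp only [List.length_append]; omega
      rw [List.append_assoc, ← ht, ← List.append_assoc, List.drop_append,
        Nat.sub_eq_zero_of_le hle, List.drop_zero] at h
      have h' : w <+: (σ a ++ w).drop i :=
        List.prefix_of_prefix_length_le h (List.prefix_append _ _)
          (by simp only [List.length_drop, List.length_append]; omega)
      obtain rfl | rfl := hw.eq_zero_or_eq_length_of_prefix_drop a hle h'
      · exact ⟨[], a :: v, rfl, rfl⟩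
      · omega

lemma exists_prefix_flatten_of_infix (hw : IsReturnMorphism σ w) {u : List B} {v : List A}
    (h : w ++ u <:+: (v.map σ).flatten) : ∃ v₂ : List A, w ++ u <+: (v₂.map σ).flatten := by
  obtain ⟨s, t, hst⟩ := h
  have hdrop : ((v.map σ).flatten ++ w).drop s.length = w ++ (u ++ t ++ w) := by
    rw [← hst]; simp
  obtain ⟨v₁, v₂, rfl, hv₁⟩ := hw.exists_eq_append_of_prefix_drop v (i := s.length)
    (by rw [← hst]; simp only [List.length_append]; omega) (by rw [hdrop]; simp)
  refine ⟨v₂, t, ?_⟩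
  have : s ++ (w ++ u ++ t) = (v₁.map σ).flatten ++ (v₂.map σ).flatten := by
    simp only [← List.flatten_append, ← List.map_append, ← hst, List.append_assoc]
  exact (List.append_inj this hv₁).2

lemma prefix_of_length_le [Nonempty A] {w' : List B} (hw : IsReturnMorphism σ w)
    (hw' : IsReturnMorphism σ w') (hlen : w.length ≤ w'.length) : w <+: w' :=
  have hv : w'.length ≤ (List.replicate w'.length (Classical.arbitrary A)).length := by simp
  List.prefix_of_prefix_length_le (hw.prefix_flatten (hlen.trans hv)) (hw'.prefix_flatten hv)
    hlen

end IsReturnMorphism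

theorem stmt_3_general {A B : Type*} [TopologicalSpace A]
    (σ : A → List B) (w w' : List B)
    (hw : IsReturnMorphism σ w) (hw' : IsReturnMorphism σ w')
    (hne : w ≠ w') (hlen : w.length ≤ w'.length)
    (X : Set (ℤ → A)) (hX : IsShiftSpace X) :
    ∃! b : B, w ++ [b] ∈ imageLang σ X := by
  obtain ⟨x, -⟩ := hX.1
  have : Nonempty A := ⟨x 0⟩
  have hpre : w <+: w' := hw.prefix_of_length_le hw' hlen
  have hlt : w.length < w'.length :=
    hlen.lt_of_ne fun h => hne (hpre.eq_of_length_le h.ge)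
  suffices key : ∀ b : B, w ++ [b] ∈ imageLang σ X ↔ w ++ [b] <+: w' by
    simpa only [key] using List.existsUnique_append_singleton_prefix hpre hlt
  intro b
  constructor
  · rintro ⟨v, -, hv⟩
    obtain ⟨v₂, hv₂⟩ := hw.exists_prefix_flatten_of_infix hv
    exact List.prefix_of_prefix_length_le (hv₂.trans (List.prefix_append _ w'))
      (hw'.prefix_flatten_append v₂) (by simpa using hlt)
  · intro hb
    obtain ⟨v, hvX, hv⟩ := exists_mem_lang_length_eq hX.1 w'.length
    exact ⟨v, hvX, (hb.trans (hw'.prefix_flatten hv.ge)).isInfix⟩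

/-- If `σ` is a return morphism for two distinct words `w, w'` with `|w| ≤ |w'|` and `X`
is a shift space over `A`, then `w` is not right special in the language of `σ · X`:
there is exactly one letter `b` with `wb` in the language of `σ · X`. -/
theorem stmt_3 {A B : Type*} [TopologicalSpace A] [DiscreteTopology A]
    (σ : A → List B) (w w' : List B)
    (hw : IsReturnMorphism σ w) (hw' : IsReturnMorphism σ w')
    (hne : w ≠ w') (hlen : w.length ≤ w'.length)
    (X : Set (ℤ → A)) (hX : IsShiftSpace X) (hover : ∀ a : A, [a] ∈ lang X) :
    ∃! b : B, w ++ [b] ∈ imageLang σ X :=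
  stmt_3_general σ w w' hw hw' hne hlen X hX
end

section
/- Let X be a shift space over A such that every bispecial factor w of X satisfies Card(E(w)) − Card(E^L(w)) − Card(E^R(w)) + 1 = 0. Then p_X(n) = (p_X(1) − 1)·n + 1 for every n ≥ 0. -/
/-- The factor complexity of `X`: the number of factors of length `n`. -/
noncomputable def complexity {A : Type*} (X : Set (ℤ → A)) (n : ℕ) : ℕ :=
  {u ∈ lang X | u.length = n}.ncard

/-!
Count the factors of length `n + 1` (resp. `n + 2`) through their factor of length `n` obtained
by deleting the last letter, the first letter, or both: `p(n+1) = ∑ Card E^R(w) = ∑ Card E^L(w)`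
and `p(n+2) = ∑ Card E(w)`, summed over `w ∈ L_n(X)`. Hence the second difference
`p(n+2) - 2 p(n+1) + p(n)` is the sum of `Card E(w) - Card E^L(w) - Card E^R(w) + 1` over `L_n(X)`,
which vanishes term by term. So `p` is affine, and `p(0) = 1`.
-/

open Finset

theorem Finset.card_eq_sum_ncard_of_bij {α β γ : Type*} [Finite γ] {s : Finset α}
    {t : Finset β} {c : β → Set γ} (g : β → γ → α) (hg : ∀ b ∈ t, ∀ x ∈ c b, g b x ∈ s)
    (hg_inj : Function.Injective (Function.uncurry g))
    (hg_surj : ∀ a ∈ s, ∃ b ∈ t, ∃ x ∈ c b, g b x = a) :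
    s.card = ∑ b ∈ t, (c b).ncard := by
  classical
  rw [sum_congr rfl fun b _ => Set.ncard_eq_toFinset_card (c b), ← card_sigma]
  symm
  refine card_bij (fun p _ => g p.1 p.2) ?_ ?_ ?_
  · rintro ⟨b, x⟩ hp
    simp only [mem_sigma, Set.Finite.mem_toFinset] at hp
    exact hg b hp.1 x hp.2
  · rintro ⟨b, x⟩ - ⟨b', x'⟩ - h
    obtain ⟨rfl, rfl⟩ := Prod.ext_iff.mp (hg_inj (a₁ := (b, x)) (a₂ := (b', x')) h)
    rfl
  · intro a ha
    obtain ⟨b, hb, x, hx, rfl⟩ := hg_surj a ha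
    exact ⟨⟨b, x⟩, by simpa using ⟨hb, hx⟩, rfl⟩

theorem Set.ncard_add_one_eq_of_subsingleton_image {α β : Type*} {s : Set (α × β)}
    (hs : s.Nonempty) (h : (Prod.fst '' s).Subsingleton ∨ (Prod.snd '' s).Subsingleton) :
    s.ncard + 1 = (Prod.fst '' s).ncard + (Prod.snd '' s).ncard := by
  obtain ⟨p, hp⟩ := hs
  rcases h with h | h
  · have : InjOn Prod.snd s := fun p hp q hq hpq =>
      Prod.ext (h (mem_image_of_mem _ hp) (mem_image_of_mem _ hq)) hpq
    rw [h.eq_singleton_of_mem (mem_image_of_mem _ hp), ncard_singleton, this.ncard_image,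
      add_comm]
  · have : InjOn Prod.fst s := fun p hp q hq hpq =>
      Prod.ext hpq (h (mem_image_of_mem _ hp) (mem_image_of_mem _ hq))
    rw [h.eq_singleton_of_mem (mem_image_of_mem _ hp), ncard_singleton, this.ncard_image]

theorem eq_sub_mul_add_of_add_eq_two_mul {u : ℕ → ℕ} (h01 : u 0 ≤ u 1)
    (h : ∀ n, u (n + 2) + u n = 2 * u (n + 1)) (n : ℕ) : u n = (u 1 - u 0) * n + u 0 := by
  induction n using Nat.twoStepInduction with
  | zero => simp
  | one => omega
  | more n ih ih' =>
    have := h n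
    linarith

section Language

variable {A : Type*} {X : Set (ℤ → A)}

theorem nil_mem_lang (hX : X.Nonempty) : [] ∈ lang X := by
  obtain ⟨x, hx⟩ := hX
  exact ⟨x, hx, 0, fun k => k.elim0⟩

theorem mem_lang_of_infix {u v : List A} (huv : u <:+: v) (hv : v ∈ lang X) : u ∈ lang X := by
  obtain ⟨s, t, rfl⟩ := huv
  obtain ⟨x, hx, i, hi⟩ := hv
  refine ⟨x, hx, i + s.length, fun k => ?_⟩
  have := hi ⟨s.length + k, by simp; omega⟩
  simp only [List.get_eq_getElem] at this ⊢
  rw [List.getElem_append_left (by simp), List.getElem_append_right (by simp)] at this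
  simpa [add_assoc] using this

theorem exists_cons_mem_lang {u : List A} (hu : u ∈ lang X) : ∃ a, a :: u ∈ lang X := by
  obtain ⟨x, hx, i, hi⟩ := hu
  refine ⟨x (i - 1), x, hx, i - 1, fun ⟨k, hk⟩ => ?_⟩
  cases k with
  | zero => simp
  | succ j =>
    simpa [show i - 1 + ((j + 1 : ℕ) : ℤ) = i + j by push_cast; ring]
      using hi ⟨j, by simpa using hk⟩

theorem exists_append_singleton_mem_lang {u : List A} (hu : u ∈ lang X) :
    ∃ b, u ++ [b] ∈ lang X := by
  obtain ⟨x, hx, i, hi⟩ := hu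
  refine ⟨x (i + u.length), x, hx, i, fun ⟨k, hk⟩ => ?_⟩
  rcases Nat.lt_or_eq_of_le (Nat.le_of_lt_succ (by simpa using hk)) with hk | rfl
  · simpa [List.getElem_append_left hk] using hi ⟨k, hk⟩
  · simp

def leftExtensions (X : Set (ℤ → A)) (w : List A) : Set A := {a | a :: w ∈ lang X}

def rightExtensions (X : Set (ℤ → A)) (w : List A) : Set A := {b | w ++ [b] ∈ lang X}

def biExtensions (X : Set (ℤ → A)) (w : List A) : Set (A × A) :=
  {p | p.1 :: (w ++ [p.2]) ∈ lang X}

/-- The multiplicity `Card E(w) - Card E^L(w) - Card E^R(w) + 1` of `w` vanishes, stated additively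
so that no truncated subtraction occurs. -/
def IsNeutral (X : Set (ℤ → A)) (w : List A) : Prop :=
  (biExtensions X w).ncard + 1 = (leftExtensions X w).ncard + (rightExtensions X w).ncard

theorem image_fst_biExtensions (w : List A) :
    Prod.fst '' biExtensions X w = leftExtensions X w := by
  ext a
  refine ⟨fun ⟨p, hp, hpa⟩ => hpa ▸ ?_, fun ha => ?_⟩
  · exact mem_lang_of_infix (List.prefix_append (p.1 :: w) [p.2]).isInfix
      (by simpa [biExtensions] using hp)
  · obtain ⟨b, hb⟩ := exists_append_singleton_mem_lang ha
    exact ⟨(a, b), by simpa [biExtensions] using hb, rfl⟩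

theorem image_snd_biExtensions (w : List A) :
    Prod.snd '' biExtensions X w = rightExtensions X w := by
  ext b
  refine ⟨fun ⟨p, hp, hpb⟩ => hpb ▸ ?_, fun hb => ?_⟩
  · exact mem_lang_of_infix (List.suffix_cons p.1 _).isInfix (by exact hp)
  · obtain ⟨a, ha⟩ := exists_cons_mem_lang hb
    exact ⟨(a, b), ha, rfl⟩

theorem isNeutral_of_ncard_le_one [Finite A] {w : List A} (hw : w ∈ lang X)
    (h : (leftExtensions X w).ncard ≤ 1 ∨ (rightExtensions X w).ncard ≤ 1) : IsNeutral X w := by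
  have hne : (biExtensions X w).Nonempty := by
    obtain ⟨a, ha⟩ := exists_cons_mem_lang hw
    rw [← Set.image_nonempty (f := Prod.fst), image_fst_biExtensions]
    exact ⟨a, ha⟩
  rw [IsNeutral, ← image_fst_biExtensions, ← image_snd_biExtensions] at *
  exact Set.ncard_add_one_eq_of_subsingleton_image hne
    (h.imp Set.ncard_le_one_iff_subsingleton.mp Set.ncard_le_one_iff_subsingleton.mp)

theorem complexity_zero (hX : X.Nonempty) : complexity X 0 = 1 := by
  rw [complexity, ← Set.ncard_singleton ([] : List A)]
  congr
  ext u
  simp only [List.length_eq_zero_iff]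
  exact ⟨And.right, fun hu => ⟨hu ▸ nil_mem_lang hX, hu⟩⟩

end Language

section Counting

variable {A : Type*} [Finite A] {X : Set (ℤ → A)}

noncomputable def factorsOfLength (X : Set (ℤ → A)) (n : ℕ) : Finset (List A) :=
  Set.Finite.toFinset (s := {u ∈ lang X | u.length = n})
    ((List.finite_length_eq A n).subset fun _ hu => hu.2)

@[simp]
theorem mem_factorsOfLength {n : ℕ} {u : List A} :
    u ∈ factorsOfLength X n ↔ u ∈ lang X ∧ u.length = n :=
  Set.Finite.mem_toFinset _

theorem complexity_eq_card (n : ℕ) : complexity X n = (factorsOfLength X n).card :=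
  Set.ncard_eq_toFinset_card _ _

theorem complexity_succ_eq_sum_rightExtensions (n : ℕ) :
    complexity X (n + 1) = ∑ w ∈ factorsOfLength X n, (rightExtensions X w).ncard := by
  rw [complexity_eq_card]
  refine card_eq_sum_ncard_of_bij (fun w b => w ++ [b]) ?_ ?_ ?_
  · intro w hw b hb
    simp_all [rightExtensions]
  · rintro ⟨w, b⟩ ⟨w', b'⟩ h
    simpa using h
  · intro v hv
    rw [mem_factorsOfLength] at hv
    obtain ⟨w, b, rfl⟩ := List.eq_nil_or_concat' v |>.resolve_left (by rintro rfl; simp at hv)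
    exact ⟨w, mem_factorsOfLength.mpr
      ⟨mem_lang_of_infix (List.prefix_append w [b]).isInfix hv.1, by simpa using hv.2⟩,
      b, hv.1, rfl⟩

theorem complexity_succ_eq_sum_leftExtensions (n : ℕ) :
    complexity X (n + 1) = ∑ w ∈ factorsOfLength X n, (leftExtensions X w).ncard := by
  rw [complexity_eq_card]
  refine card_eq_sum_ncard_of_bij (fun w a => a :: w) ?_ ?_ ?_
  · intro w hw a ha
    simp_all [leftExtensions]
  · rintro ⟨w, a⟩ ⟨w', a'⟩ h
    simpa [and_comm] using h
  · rintro (_ | ⟨a, w⟩) hv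
    · simp at hv
    rw [mem_factorsOfLength] at hv
    exact ⟨w, mem_factorsOfLength.mpr
      ⟨mem_lang_of_infix (List.suffix_cons a w).isInfix hv.1, by simpa using hv.2⟩,
      a, hv.1, rfl⟩

theorem complexity_add_two_eq_sum_biExtensions (n : ℕ) :
    complexity X (n + 2) = ∑ w ∈ factorsOfLength X n, (biExtensions X w).ncard := by
  rw [complexity_eq_card]
  refine card_eq_sum_ncard_of_bij (fun w p => p.1 :: (w ++ [p.2])) ?_ ?_ ?_
  · intro w hw p hp
    simp_all [biExtensions]
  · rintro ⟨w, a, b⟩ ⟨w', a', b'⟩ h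
    simp_all
  · rintro (_ | ⟨a, v⟩) hv
    · simp at hv
    rw [mem_factorsOfLength] at hv
    obtain ⟨w, b, rfl⟩ := List.eq_nil_or_concat' v |>.resolve_left (by rintro rfl; simp at hv)
    have hw : w <:+: a :: (w ++ [b]) :=
      (List.prefix_append w [b]).isInfix.trans (List.suffix_cons a _).isInfix
    exact ⟨w, mem_factorsOfLength.mpr ⟨mem_lang_of_infix hw hv.1, by simpa using hv.2⟩,
      (a, b), hv.1, rfl⟩

theorem complexity_add_two_add_complexity (hneutral : ∀ w ∈ lang X, IsNeutral X w) (n : ℕ) :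
    complexity X (n + 2) + complexity X n = 2 * complexity X (n + 1) :=
  calc complexity X (n + 2) + complexity X n
      = ∑ w ∈ factorsOfLength X n, ((biExtensions X w).ncard + 1) := by
        rw [complexity_add_two_eq_sum_biExtensions, complexity_eq_card, sum_add_distrib,
          card_eq_sum_ones]
    _ = ∑ w ∈ factorsOfLength X n, ((leftExtensions X w).ncard + (rightExtensions X w).ncard) :=
        sum_congr rfl fun w hw => hneutral w (mem_factorsOfLength.mp hw).1
    _ = 2 * complexity X (n + 1) := by
        rw [sum_add_distrib, ← complexity_succ_eq_sum_leftExtensions,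
          ← complexity_succ_eq_sum_rightExtensions, two_mul]

theorem complexity_pos (hX : X.Nonempty) (n : ℕ) : 0 < complexity X n := by
  obtain ⟨x, hx⟩ := hX
  refine (Set.ncard_pos ((List.finite_length_eq A n).subset fun _ hu => hu.2)).mpr
    ⟨List.ofFn fun k : Fin n => x k, ⟨x, hx, 0, fun k => by simp⟩, by simp⟩

end Counting

theorem stmt_7_general {A : Type*} [Fintype A] [TopologicalSpace A]
    (X : Set (ℤ → A)) (hX : IsShiftSpace X)
    (hbisp : ∀ w ∈ lang X,
      2 ≤ ({a : A | a :: w ∈ lang X}).ncard →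
      2 ≤ ({b : A | w ++ [b] ∈ lang X}).ncard →
      ({p : A × A | p.1 :: (w ++ [p.2]) ∈ lang X}).ncard + 1 =
        ({a : A | a :: w ∈ lang X}).ncard + ({b : A | w ++ [b] ∈ lang X}).ncard) :
    ∀ n : ℕ, complexity X n = (complexity X 1 - 1) * n + 1 := by
  have hneutral : ∀ w ∈ lang X, IsNeutral X w := fun w hw => by
    by_cases hbi : 2 ≤ (leftExtensions X w).ncard ∧ 2 ≤ (rightExtensions X w).ncard
    · exact hbisp w hw hbi.1 hbi.2
    · exact isNeutral_of_ncard_le_one hw (by omega)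
  have h01 : complexity X 0 ≤ complexity X 1 := by
    rw [complexity_zero hX.1]
    exact complexity_pos hX.1 1
  simpa only [complexity_zero hX.1] using
    eq_sub_mul_add_of_add_eq_two_mul h01 (complexity_add_two_add_complexity hneutral)

/-- If every bispecial factor `w` of the shift space `X` satisfies
`Card(E(w)) − Card(E^L(w)) − Card(E^R(w)) + 1 = 0`, then
`p_X(n) = (p_X(1) − 1)·n + 1` for every `n`. -/
theorem stmt_7 {A : Type*} [Fintype A] [TopologicalSpace A] [DiscreteTopology A]
    (X : Set (ℤ → A)) (hX : IsShiftSpace X)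
    (hbisp : ∀ w ∈ lang X,
      2 ≤ ({a : A | a :: w ∈ lang X}).ncard →
      2 ≤ ({b : A | w ++ [b] ∈ lang X}).ncard →
      ({p : A × A | p.1 :: (w ++ [p.2]) ∈ lang X}).ncard + 1 =
        ({a : A | a :: w ∈ lang X}).ncard + ({b : A | w ++ [b] ∈ lang X}).ncard) :
    ∀ n : ℕ, complexity X n = (complexity X 1 - 1) * n + 1 :=
  stmt_7_general X hX hbisp
end

section
/- Let G = G({C_1, …, C_k}) be a multi-clique graph on vertex set V that is acyclic for the coloring and connected. Suppose D ∪ E = C_1 and Card(D ∩ E) = 1. Then G' = G({D, E, C_2, …, C_k}) is connected, acyclic for the coloring, and a subgraph of G. -/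
/-- In the edge-colored multigraph determined by the cliques `{v | M ℓ v}` (one clique of
color `ℓ` for each label `ℓ`), there is an edge of color `ℓ` between `x` and `y`. -/
def MEdge {Λ V : Type*} (M : Λ → V → Prop) (ℓ : Λ) (x y : V) : Prop :=
  x ≠ y ∧ M ℓ x ∧ M ℓ y

/-- A simple cycle of length `n + 2` in the colored multigraph determined by `M`:
pairwise distinct vertices `v i`, consecutive vertices joined by an edge of color `ℓ i`,
and the (undirected, colored) edges pairwise distinct. -/
def IsCycleM {Λ V : Type*} (M : Λ → V → Prop) (n : ℕ) (v : Fin (n + 2) → V)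
    (ℓ : Fin (n + 2) → Λ) : Prop :=
  Function.Injective v ∧ (∀ i, MEdge M (ℓ i) (v i) (v (i + 1))) ∧
    ∀ i j, i ≠ j → ¬(ℓ i = ℓ j ∧ ({v i, v (i + 1)} : Set V) = {v j, v (j + 1)})

/-- The colored multigraph determined by `M` is acyclic for the coloring: every simple
cycle only uses edges of a single color. -/
def AcyclicForColoring {Λ V : Type*} (M : Λ → V → Prop) : Prop :=
  ∀ n v ℓ, IsCycleM M n v ℓ → ∀ i j, ℓ i = ℓ j

/-- The colored multigraph determined by `M` is connected (on the whole vertex set `V`). -/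
def MConnected {Λ V : Type*} (M : Λ → V → Prop) : Prop :=
  ∀ x y : V, Relation.ReflTransGen (fun p q => ∃ ℓ, MEdge M ℓ p q) x y

/-- The membership predicate of the colored multi-clique `G({D, E, C_2, …, C_k})`
obtained from `G({C_1, …, C_k})` (indexed by `Fin (k+1)`, with `C 0 = C_1`) by
replacing the clique `C 0` by the two cliques `D` and `E` (with fresh distinct colors). -/
def Msplit {V : Type*} (k : ℕ) (C : Fin (k + 1) → Set V) (D E : Set V) :
    Bool ⊕ {i : Fin (k + 1) // i ≠ 0} → V → Prop
  | Sum.inl true, x => x ∈ D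
  | Sum.inl false, x => x ∈ E
  | Sum.inr i, x => x ∈ C i.1

/-!
Every edge of `G` inside `C_1` is an edge of `D` or of `E`, or a path of two such edges through
the vertex `w` with `D ∩ E = {w}`, so `G'` is still connected.

Merging the colors of `D` and `E` maps `G'` onto `G`. If a cycle of `G'` is not monochromatic
after merging, it is still a simple cycle of `G` (only a cycle of length two can lose
distinctness of its edges), contradicting acyclicity of `G`. So after merging it is
monochromatic: either it was already, or it only uses `D` and `E`. A cycle switching between
`D` and `E` switches at least twice, each time at a vertex of `D ∩ E = {w}`, which contradicts
the injectivity of its vertices.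
-/

namespace Fin

theorem apply_eq_apply_of_forall_ne {α : Type*} {n : ℕ} {b : Fin (n + 1) → α}
    {p : Fin (n + 1)} (h : ∀ r, r ≠ p → b r = b (r + 1)) (i j : Fin (n + 1)) : b i = b j := by
  have hwalk : ∀ m : Fin (n + 1), b (p + 1 + m) = b (p + 1) := by
    refine Fin.induction (by simp) fun m ih => ?_
    have hne : p + 1 + m.castSucc ≠ p := by
      rw [add_assoc, Ne, add_eq_left, add_comm (1 : Fin (n + 1)), Fin.coeSucc_eq_succ]
      exact Fin.succ_ne_zero m
    rw [← Fin.coeSucc_eq_succ, ← add_assoc, ← h _ hne, ih]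
  rw [← add_sub_cancel (p + 1) i, ← add_sub_cancel (p + 1) j, hwalk, hwalk]

theorem eq_or_eq_of_add_one_eq {n : ℕ} {i j : Fin (n + 2)} (hij : i + 1 = j) (hji : j + 1 = i)
    (a : Fin (n + 2)) : a = i ∨ a = j := by
  rw [Fin.ext_iff, Fin.val_add_one] at hij hji
  simp only [Fin.ext_iff, Fin.val_last] at hij hji ⊢
  split_ifs at hij hji <;> omega

end Fin

section ColoredMultigraph

variable {Λ Λ' V : Type*} {M : Λ → V → Prop} {N : Λ' → V → Prop}

theorem reflTransGen_medge_of_mem {c : Λ} {x y : V} (hx : M c x) (hy : M c y) :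
    Relation.ReflTransGen (fun p q => ∃ ℓ, MEdge M ℓ p q) x y := by
  by_cases hxy : x = y
  · exact hxy ▸ Relation.ReflTransGen.refl
  · exact Relation.ReflTransGen.single ⟨c, hxy, hx, hy⟩

theorem MConnected.of_medge (hM : MConnected M)
    (h : ∀ c x y, MEdge M c x y →
      Relation.ReflTransGen (fun p q => ∃ ℓ, MEdge N ℓ p q) x y) :
    MConnected N := fun x y =>
  Relation.reflTransGen_closed (fun _ _ ⟨c, hc⟩ => h c _ _ hc) _ _ (hM x y)

namespace IsCycleM

variable {n : ℕ} {v : Fin (n + 2) → V} {ℓ : Fin (n + 2) → Λ}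

theorem add_one_eq_of_pair_eq (h : IsCycleM M n v ℓ) {i j : Fin (n + 2)} (hij : i ≠ j)
    (he : ({v i, v (i + 1)} : Set V) = {v j, v (j + 1)}) : i + 1 = j ∧ j + 1 = i := by
  have hi : v i ∈ ({v j, v (j + 1)} : Set V) := he ▸ Set.mem_insert _ _
  have hj : v j ∈ ({v i, v (i + 1)} : Set V) := he ▸ Set.mem_insert _ _
  simp only [Set.mem_insert_iff, Set.mem_singleton_iff, h.1.eq_iff] at hi hj
  exact ⟨(hj.resolve_left hij.symm).symm, (hi.resolve_left hij).symm⟩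

/-- Recoloring a cycle along `f` keeps it a cycle unless it becomes monochromatic: only a
cycle of length two can have two edges on the same pair of vertices. -/
theorem map (h : IsCycleM M n v ℓ) {f : Λ → Λ'} (hf : ∀ c x, M c x → N (f c) x)
    (hℓ : ∃ a b, f (ℓ a) ≠ f (ℓ b)) : IsCycleM N n v (f ∘ ℓ) := by
  refine ⟨h.1, fun i => ⟨(h.2.1 i).1, hf _ _ (h.2.1 i).2.1, hf _ _ (h.2.1 i).2.2⟩, ?_⟩
  rintro i j hij ⟨hfij, he⟩
  obtain ⟨hi, hj⟩ := h.add_one_eq_of_pair_eq hij he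
  obtain ⟨a, b, hab⟩ := hℓ
  rcases Fin.eq_or_eq_of_add_one_eq hi hj a with rfl | rfl <;>
    rcases Fin.eq_or_eq_of_add_one_eq hi hj b with rfl | rfl <;>
    simp_all

/-- A cycle using only two colors whose cliques share at most one vertex passes through that
vertex at most once, so it cannot switch colors twice. -/
theorem eq_of_forall_eq_or_eq (h : IsCycleM M n v ℓ) {a b : Λ}
    (hab : {x | M a x ∧ M b x}.Subsingleton) (hℓ : ∀ r, ℓ r = a ∨ ℓ r = b)
    (i j : Fin (n + 2)) :
    ℓ i = ℓ j := by
  have hswitch : ∀ r, ℓ r ≠ ℓ (r + 1) → M a (v (r + 1)) ∧ M b (v (r + 1)) := by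
    intro r hr
    have h₁ := (h.2.1 r).2.2
    have h₂ := (h.2.1 (r + 1)).2.1
    rcases hℓ r with hr₁ | hr₁ <;> rcases hℓ (r + 1) with hr₂ | hr₂ <;>
      simp_all
  by_contra hij
  have hnot : ∀ p, ∃ r, r ≠ p ∧ ℓ r ≠ ℓ (r + 1) := by
    by_contra! hconst
    obtain ⟨p, hp⟩ := hconst
    exact hij (Fin.apply_eq_apply_of_forall_ne hp i j)
  obtain ⟨r, -, hr⟩ := hnot 0
  obtain ⟨s, hsr, hs⟩ := hnot r
  exact hsr (add_right_cancel (h.1 (hab (hswitch s hs) (hswitch r hr))))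

end IsCycleM

theorem AcyclicForColoring.apply_eq_of_isCycleM (hN : AcyclicForColoring N) {f : Λ → Λ'}
    (hf : ∀ c x, M c x → N (f c) x) {n : ℕ} {v : Fin (n + 2) → V} {ℓ : Fin (n + 2) → Λ}
    (h : IsCycleM M n v ℓ) (i j : Fin (n + 2)) : f (ℓ i) = f (ℓ j) := by
  by_contra hij
  exact hij (hN n v _ (h.map hf ⟨i, j, hij⟩) i j)

end ColoredMultigraph

namespace Msplit

variable {V : Type*} {k : ℕ} {C : Fin (k + 1) → Set V} {D E : Set V}

def mergeColor : Bool ⊕ {i : Fin (k + 1) // i ≠ 0} → Fin (k + 1)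
  | Sum.inl _ => 0
  | Sum.inr i => i.1

theorem mergeColor_eq_zero_iff {c : Bool ⊕ {i : Fin (k + 1) // i ≠ 0}} :
    mergeColor c = 0 ↔ c = Sum.inl true ∨ c = Sum.inl false := by
  match c with
  | Sum.inl true | Sum.inl false => simp [mergeColor]
  | Sum.inr ⟨i, hi⟩ => simp [mergeColor, hi]

theorem eq_of_mergeColor_eq {c c' : Bool ⊕ {i : Fin (k + 1) // i ≠ 0}}
    (h : mergeColor c = mergeColor c') (h0 : mergeColor c ≠ 0) : c = c' := by
  match c, c' with
  | Sum.inl _, _ => exact absurd rfl h0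
  | Sum.inr ⟨_, hi⟩, Sum.inl _ => exact absurd h hi
  | Sum.inr _, Sum.inr _ => exact congrArg Sum.inr (Subtype.ext h)

theorem mem_mergeColor (hDE : D ∪ E = C 0) {c : Bool ⊕ {i : Fin (k + 1) // i ≠ 0}} {x : V}
    (hx : Msplit k C D E c x) : x ∈ C (mergeColor c) := by
  rcases c with (_ | _) | i
  · exact hDE ▸ Or.inr hx
  · exact hDE ▸ Or.inl hx
  · exact hx

theorem medge_mergeColor (hDE : D ∪ E = C 0) {c : Bool ⊕ {i : Fin (k + 1) // i ≠ 0}} {x y : V}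
    (he : MEdge (Msplit k C D E) c x y) : MEdge (fun i (x : V) => x ∈ C i) (mergeColor c) x y :=
  ⟨he.1, mem_mergeColor hDE he.2.1, mem_mergeColor hDE he.2.2⟩

theorem reflTransGen_of_medge (hDE : D ∪ E = C 0) {w : V} (hw : w ∈ D ∩ E) {i : Fin (k + 1)}
    {x y : V} (he : MEdge (fun i (x : V) => x ∈ C i) i x y) :
    Relation.ReflTransGen (fun p q => ∃ ℓ, MEdge (Msplit k C D E) ℓ p q) x y := by
  obtain ⟨hxy, hx, hy⟩ := he
  by_cases hi : i = 0
  · subst hi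
    rw [← hDE] at hx hy
    have hwD : Msplit k C D E (Sum.inl true) w := hw.1
    have hwE : Msplit k C D E (Sum.inl false) w := hw.2
    rcases hx with hx | hx <;> rcases hy with hy | hy
    · exact reflTransGen_medge_of_mem (c := Sum.inl true) hx hy
    · exact (reflTransGen_medge_of_mem (c := Sum.inl true) hx hwD).trans
        (reflTransGen_medge_of_mem hwE hy)
    · exact (reflTransGen_medge_of_mem (c := Sum.inl false) hx hwE).trans
        (reflTransGen_medge_of_mem hwD hy)
    · exact reflTransGen_medge_of_mem (c := Sum.inl false) hx hy
  · exact Relation.ReflTransGen.single ⟨Sum.inr ⟨i, hi⟩, hxy, hx, hy⟩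

theorem acyclicForColoring (hDE : D ∪ E = C 0) (hDE₁ : (D ∩ E).Subsingleton)
    (hacyc : AcyclicForColoring (fun (i : Fin (k + 1)) (x : V) => x ∈ C i)) :
    AcyclicForColoring (Msplit k C D E) := by
  intro n v ℓ hcyc i j
  have hmerge := hacyc.apply_eq_of_isCycleM (M := Msplit k C D E)
    (fun _ _ => mem_mergeColor hDE) hcyc
  by_cases h0 : mergeColor (ℓ i) = 0
  · exact hcyc.eq_of_forall_eq_or_eq (a := Sum.inl true) (b := Sum.inl false) hDE₁
      (fun r => mergeColor_eq_zero_iff.mp ((hmerge r i).trans h0)) i j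
  · exact eq_of_mergeColor_eq (hmerge i j) h0

end Msplit

theorem stmt_10_general {V : Type*} (k : ℕ) (C : Fin (k + 1) → Set V)
    (D E : Set V) (hDE : D ∪ E = C 0) (hone : (D ∩ E).ncard = 1)
    (hacyc : AcyclicForColoring (fun (i : Fin (k + 1)) (x : V) => x ∈ C i))
    (hconn : MConnected (fun (i : Fin (k + 1)) (x : V) => x ∈ C i)) :
    MConnected (Msplit k C D E) ∧ AcyclicForColoring (Msplit k C D E) ∧
      (∀ x y : V, (∃ ℓ, MEdge (Msplit k C D E) ℓ x y) →
        ∃ i : Fin (k + 1), MEdge (fun i (x : V) => x ∈ C i) i x y) := by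
  obtain ⟨w, hw⟩ := Set.ncard_eq_one.mp hone
  have hwDE : w ∈ D ∩ E := hw ▸ Set.mem_singleton w
  refine ⟨hconn.of_medge fun _ _ _ => Msplit.reflTransGen_of_medge hDE hwDE,
    Msplit.acyclicForColoring hDE (hw ▸ Set.subsingleton_singleton) hacyc,
    fun _ _ ⟨c, he⟩ => ⟨Msplit.mergeColor c, Msplit.medge_mergeColor hDE he⟩⟩

/-- If the multi-clique `G({C_1, …, C_k})` is acyclic for the coloring and connected,
and `D ∪ E = C_1` with `Card(D ∩ E) = 1`, then `G({D, E, C_2, …, C_k})` is connected,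
acyclic for the coloring, and a subgraph of `G({C_1, …, C_k})`. -/
theorem stmt_10 {V : Type*} [Fintype V] (k : ℕ) (C : Fin (k + 1) → Set V)
    (D E : Set V) (hDE : D ∪ E = C 0) (hone : (D ∩ E).ncard = 1)
    (hacyc : AcyclicForColoring (fun (i : Fin (k + 1)) (x : V) => x ∈ C i))
    (hconn : MConnected (fun (i : Fin (k + 1)) (x : V) => x ∈ C i)) :
    MConnected (Msplit k C D E) ∧ AcyclicForColoring (Msplit k C D E) ∧
      (∀ x y : V, (∃ ℓ, MEdge (Msplit k C D E) ℓ x y) →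
        ∃ i : Fin (k + 1), MEdge (fun i (x : V) => x ∈ C i) i x y) :=
  stmt_10_general k C D E hDE hone hacyc hconn
end

section
/- Let X be a shift space and N ≥ 0. The extension graph E_X(v) is acyclic for all v ∈ L(X) of length < N if and only if, for all n ≤ N, the graph G^L_n(X) is acyclic for the labeling (every simple cycle in G^L_n(X) uses edges with a single label). -/
/-- The extension graph of the word `v` with respect to the factorial language `L`:
the bipartite graph on the left extensions and the right extensions of `v`, with an
edge between `a` (left) and `b` (right) whenever `a v b ∈ L`. -/
def extGraph {A : Type*} (L : Set (List A)) (v : List A) :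
    SimpleGraph ({a : A // a :: v ∈ L} ⊕ {b : A // v ++ [b] ∈ L}) :=
  SimpleGraph.fromRel (fun p q =>
    match p, q with
    | Sum.inl a, Sum.inr b => (a.1 :: (v ++ [b.1])) ∈ L
    | _, _ => False)

/-- Membership predicate describing the colored multigraph `G^L_n(X)`: the label `w`
contributes the clique `E^L_X(w)` on the vertex set `A`, for each `w` of length `n`
in the language of `X`. -/
def GLmem {A : Type*} (X : Set (ℤ → A)) (n : ℕ) (w : List A) (a : A) : Prop :=
  w.length = n ∧ w ∈ lang X ∧ (a :: w) ∈ lang X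


/-!
A multigraph whose edges of color `ℓ` form the clique `{x | M ℓ x}` is acyclic for its
coloring iff its vertex–label incidence graph is a forest: a cycle of the incidence graph is a
cycle with pairwise distinct colors, and conversely the edge `x — ℓ` at a change of color along a
cycle is not a bridge of the incidence graph. The extension graph `E_X(v)` is the incidence graph
of the multigraph on the left extensions of `v` in which the right extension `b` contributes the
clique of those `a` with `avb ∈ L`.

This multigraph embeds into `G^L_{|v|+1}(X)` via `b ↦ vb`, which gives one direction. For the
other, dropping the last letter of the labels maps a cycle of `G^L_{n+1}(X)` to a closed walk of
`G^L_n(X)`; if the latter is acyclic for its labeling, all labels of the cycle are of the form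
`ub` for a single `u` of length `n`, and the cycle is a cycle of the multigraph of `E_X(u)`.
-/

section Coloring

variable {Λ V : Type*} {M : Λ → V → Prop}

def incidenceGraph (M : Λ → V → Prop) : SimpleGraph (V ⊕ Λ) :=
  SimpleGraph.fromRel fun p q =>
    match p, q with
    | Sum.inl x, Sum.inr ℓ => M ℓ x
    | _, _ => False

@[simp]
theorem incidenceGraph_adj_inl_inr {x : V} {ℓ : Λ} :
    (incidenceGraph M).Adj (Sum.inl x) (Sum.inr ℓ) ↔ M ℓ x := by
  simp [incidenceGraph]

@[simp]
theorem incidenceGraph_adj_inr_inl {x : V} {ℓ : Λ} :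
    (incidenceGraph M).Adj (Sum.inr ℓ) (Sum.inl x) ↔ M ℓ x := by
  simp [incidenceGraph]

theorem incidenceGraph_isLeft_of_adj {p q : V ⊕ Λ} (h : (incidenceGraph M).Adj p q) :
    q.isLeft = !p.isLeft := by
  rcases p with x | ℓ <;> rcases q with y | ℓ' <;> simp_all [incidenceGraph]

open SimpleGraph in
theorem incidenceGraph_getVert_isLeft {u w : V ⊕ Λ} (p : (incidenceGraph M).Walk u w)
    (hu : u.isLeft) {k : ℕ} (hk : k ≤ p.length) : (p.getVert k).isLeft = decide (Even k) := by
  induction k with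
  | zero => simpa using hu
  | succ k ih =>
    rw [incidenceGraph_isLeft_of_adj (p.adj_getVert_succ (by omega)), ih (by omega)]
    by_cases hk : Even k <;> simp [hk, Nat.even_add_one]

theorem Function.Injective.cyclePair_ne {n : ℕ} {v : Fin (n + 3) → V}
    (hv : Function.Injective v) {i j : Fin (n + 3)} (hij : i ≠ j) :
    ({v i, v (i + 1)} : Set V) ≠ {v j, v (j + 1)} := by
  intro h
  rcases Set.pair_eq_pair_iff.mp h with ⟨h1, -⟩ | ⟨h1, h2⟩
  · exact hij (hv h1)
  · have h := hv h2
    rw [hv h1, add_assoc, add_eq_left] at h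
    have := congrArg Fin.val h
    rw [Fin.val_add, Fin.val_one, Fin.val_zero, Nat.mod_eq_of_lt (by omega)] at this
    omega

open Fin.NatCast in
theorem Fin.apply_eq_of_forall_apply_add_one {α : Type*} {n : ℕ} {f : Fin (n + 1) → α}
    (h : ∀ i, f (i + 1) = f i) (i j : Fin (n + 1)) : f i = f j := by
  have hconst : ∀ k : ℕ, f k = f 0 := fun k => by
    induction k with
    | zero => simp
    | succ k ih => rw [Nat.cast_succ, h, ih]
  rw [← Fin.cast_val_eq_self i, ← Fin.cast_val_eq_self j, hconst, hconst]

/-- The edge-distinctness condition of `IsCycleM` only matters for 2-cycles, where it can fail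
only if both labels already agree. -/
theorem AcyclicForColoring.label_eq_of_injective (h : AcyclicForColoring M) {n : ℕ}
    {v : Fin (n + 2) → V} {ℓ : Fin (n + 2) → Λ} (hv : Function.Injective v)
    (he : ∀ i, MEdge M (ℓ i) (v i) (v (i + 1))) (i j : Fin (n + 2)) : ℓ i = ℓ j := by
  rcases n with _ | n
  · have h01 : ℓ 0 = ℓ 1 := by
      by_contra hne
      refine hne (h 0 v ℓ ⟨hv, he, fun i' j' hij' hc => hne ?_⟩ 0 1)
      have := hc.1
      fin_cases i' <;> fin_cases j' <;> simp_all
    fin_cases i <;> fin_cases j <;> simp [h01]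
  · exact h _ v ℓ ⟨hv, he, fun i' j' hij' hc => hv.cyclePair_ne hij' hc.2⟩ i j

theorem AcyclicForColoring.of_map {Λ' V' : Type*} {M' : Λ' → V' → Prop}
    (h : AcyclicForColoring M') {f : V → V'} {g : Λ → Λ'} (hf : Function.Injective f)
    (hg : Function.Injective g) (hM : ∀ ℓ x, M ℓ x → M' (g ℓ) (f x)) :
    AcyclicForColoring M := by
  intro n v ℓ hc i j
  refine hg (h.label_eq_of_injective (ℓ := g ∘ ℓ) (hf.comp hc.1) (fun k => ?_) i j)
  obtain ⟨hne, h1, h2⟩ := hc.2.1 k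
  exact ⟨hf.ne hne, hM _ _ h1, hM _ _ h2⟩

open SimpleGraph Fin.NatCast in
theorem acyclicForColoring_of_isAcyclic (h : (incidenceGraph M).IsAcyclic) :
    AcyclicForColoring M := by
  intro n v ℓ hc
  refine Fin.apply_eq_of_forall_apply_add_one fun i => ?_
  by_contra hne
  set j := i + 1
  have hv : ∀ k : ℕ, 0 < k → k < n + 2 → v (j + k) ≠ v j := by
    intro k hk hkn h
    have := add_eq_left.mp (hc.1 h)
    rw [Fin.natCast_eq_zero] at this
    exact absurd (Nat.le_of_dvd hk this) (by omega)
  -- The edge `v j — ℓ j` is a bridge, but going once around the cycle avoids it: its last step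
  -- `ℓ i — v j` is a different edge since `ℓ i ≠ ℓ j`.
  set e := s(Sum.inl (v j), Sum.inr (ℓ j))
  have hbridge := isAcyclic_iff_forall_adj_isBridge.mp h
    (incidenceGraph_adj_inl_inr.mpr (hc.2.1 j).2.1)
  have around : ∀ k ≤ n + 1, ((incidenceGraph M).deleteEdges {e}).Reachable
      (Sum.inr (ℓ j)) (Sum.inl (v (j + (k + 1 : ℕ)))) := by
    intro k hk
    induction k with
    | zero =>
      refine Adj.reachable ((deleteEdges_adj ..).mpr ⟨?_, ?_⟩)
      · exact incidenceGraph_adj_inr_inl.mpr (hc.2.1 j).2.2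
      · simpa [e] using hv 1 (by omega) (by omega)
    | succ k ih =>
      set a : Fin (n + 2) := j + (k + 1 : ℕ)
      have ha : j + ((k + 1 + 1 : ℕ) : Fin (n + 2)) = a + 1 := by
        rw [Nat.cast_succ (k + 1), ← add_assoc]
      rw [ha]
      refine (ih (by omega)).trans ((Adj.reachable (v := Sum.inr (ℓ a)) ?_).trans
        (Adj.reachable ?_))
      · rw [deleteEdges_adj]
        refine ⟨incidenceGraph_adj_inl_inr.mpr (hc.2.1 a).2.1, ?_⟩
        simp only [e, Set.mem_singleton_iff, Sym2.eq_iff, Sum.inl.injEq, Sum.inr.injEq,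
          reduceCtorEq, and_false, or_false, not_and]
        exact fun h => absurd h (hv (k + 1) (by omega) (by omega))
      · rw [deleteEdges_adj]
        refine ⟨incidenceGraph_adj_inr_inl.mpr (hc.2.1 a).2.2, ?_⟩
        simp only [e, Set.mem_singleton_iff, Sym2.eq_iff, Sum.inl.injEq, Sum.inr.injEq,
          reduceCtorEq, false_and, false_or, not_and]
        intro hℓ hva
        rw [add_left_injective 1 (hc.1 hva)] at hℓ
        exact hne hℓ.symm
  have hback := around (n + 1) le_rfl
  simp only [show ((n + 1 + 1 : ℕ) : Fin (n + 2)) = 0 by simp, add_zero] at hback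
  exact isBridge_iff.mp hbridge hback.symm

open SimpleGraph in
theorem not_acyclicForColoring_of_isCycle {u : V ⊕ Λ} {c : (incidenceGraph M).Walk u u}
    (hc : c.IsCycle) (hu : u.isLeft) : ¬ AcyclicForColoring M := by
  intro hM
  have hpar := fun k (hk : k ≤ c.length) => incidenceGraph_getVert_isLeft c hu hk
  obtain ⟨n, hn⟩ : ∃ n, c.length = 2 * n + 4 := by
    have heven := hpar c.length le_rfl
    rw [c.getVert_length, hu] at heven
    obtain ⟨m, hm⟩ : Even c.length := by simpa using heven.symm
    exact ⟨m - 2, by have := hc.three_le_length; omega⟩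
  have hleft : ∀ i : Fin (n + 2), ∃ x, c.getVert (2 * i) = Sum.inl x := fun i =>
    Sum.isLeft_iff.mp (by rw [hpar _ (by omega)]; simp)
  have hright : ∀ i : Fin (n + 2), ∃ ℓ, c.getVert (2 * i + 1) = Sum.inr ℓ := fun i =>
    Sum.isRight_iff.mp (by rw [← Sum.not_isLeft, hpar _ (by omega)]; simp)
  choose v hv using hleft
  choose ℓ hℓ using hright
  have hinj : ∀ k k', k < c.length → k' < c.length → c.getVert k = c.getVert k' → k = k' :=
    fun k k' hk hk' => hc.getVert_injOn' (by rw [Set.mem_ofPred_eq]; omega)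
      (by rw [Set.mem_ofPred_eq]; omega)
  have hnext : ∀ i : Fin (n + 2), c.getVert (2 * i + 2) = Sum.inl (v (i + 1)) := by
    intro i
    rw [← hv, Fin.val_add_one]
    split
    · subst i
      rw [Fin.val_last, show 2 * (n + 1) + 2 = c.length by omega, c.getVert_length,
        mul_zero, c.getVert_zero]
    · rfl
  have hvinj : Function.Injective v := fun i j h => Fin.ext <| by
    have := hinj _ _ (by omega) (by omega) ((hv i).trans ((congrArg _ h).trans (hv j).symm))
    omega
  have he : ∀ i, MEdge M (ℓ i) (v i) (v (i + 1)) := fun i => by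
    refine ⟨hvinj.ne fun h => one_ne_zero (add_eq_left.mp h.symm), ?_, ?_⟩
    · simpa [hv, hℓ] using c.adj_getVert_succ (i := 2 * i) (by omega)
    · simpa [hℓ, hnext] using c.adj_getVert_succ (i := 2 * i + 1) (by omega)
  have h13 := hinj 1 3 (by omega) (by omega)
    ((hℓ 0).trans ((congrArg _ (hM.label_eq_of_injective hvinj he 0 1)).trans (hℓ 1).symm))
  omega

open SimpleGraph in
theorem isAcyclic_of_acyclicForColoring (h : AcyclicForColoring M) :
    (incidenceGraph M).IsAcyclic := by
  classical
  intro u c hc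
  cases hu : u.isLeft
  · have hsnd : (c.getVert 1).isLeft := by
      simpa [hu] using incidenceGraph_isLeft_of_adj
        (c.adj_getVert_succ (i := 0) (Walk.not_nil_iff_lt_length.mp hc.not_nil))
    exact not_acyclicForColoring_of_isCycle (hc.rotate (c.getVert_mem_support 1)) hsnd h
  · exact not_acyclicForColoring_of_isCycle hc hu h

theorem isAcyclic_incidenceGraph_iff : (incidenceGraph M).IsAcyclic ↔ AcyclicForColoring M :=
  ⟨acyclicForColoring_of_isAcyclic, isAcyclic_of_acyclicForColoring⟩

end Coloring

section ShiftSpace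

variable {A : Type*} {X : Set (ℤ → A)}

theorem mem_lang_of_isPrefix {u w : List A} (h : u <+: w) (hw : w ∈ lang X) : u ∈ lang X := by
  obtain ⟨t, rfl⟩ := h
  obtain ⟨x, hx, i, hi⟩ := hw
  refine ⟨x, hx, i, fun k => ?_⟩
  simpa [List.getElem_append_left k.2] using hi ⟨k, by rw [List.length_append]; omega⟩

theorem GLmem.dropLast {m : ℕ} {w : List A} {a : A} (h : GLmem X (m + 1) w a) :
    GLmem X m w.dropLast a := by
  obtain ⟨hlen, hw, haw⟩ := h
  have hpre := List.dropLast_prefix w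
  exact ⟨by simp [hlen], mem_lang_of_isPrefix hpre hw,
    mem_lang_of_isPrefix ((List.prefix_cons_inj a).mpr hpre) haw⟩

/-- `E_X(v)` as a colored multigraph: the right extension `b` contributes the clique of the
left extensions `a` with `avb ∈ L`. -/
def extCliques (L : Set (List A)) (v : List A) :
    {b : A // v ++ [b] ∈ L} → {a : A // a :: v ∈ L} → Prop :=
  fun b a => a.1 :: (v ++ [b.1]) ∈ L

theorem extGraph_eq_incidenceGraph (L : Set (List A)) (v : List A) :
    extGraph L v = incidenceGraph (extCliques L v) := by
  ext p q
  rcases p with a | b <;> rcases q with a' | b' <;> simp [extGraph, incidenceGraph, extCliques]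

theorem acyclicForColoring_GLmem_zero (X : Set (ℤ → A)) : AcyclicForColoring (GLmem X 0) :=
  fun _ _ ℓ hc i j => by
    rw [List.eq_nil_of_length_eq_zero (hc.2.1 i).2.1.1,
      List.eq_nil_of_length_eq_zero (hc.2.1 j).2.1.1]

theorem AcyclicForColoring.extCliques {v : List A}
    (h : AcyclicForColoring (GLmem X (v.length + 1))) :
    AcyclicForColoring (extCliques (lang X) v) :=
  h.of_map (g := fun b => v ++ [b.1]) Subtype.val_injective
    (fun _ _ hb => Subtype.ext (by simpa using hb)) fun b _ hab => ⟨by simp, b.2, hab⟩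

theorem acyclicForColoring_GLmem_succ {m : ℕ} (hm : AcyclicForColoring (GLmem X m))
    (hext : ∀ u ∈ lang X, u.length = m → AcyclicForColoring (extCliques (lang X) u)) :
    AcyclicForColoring (GLmem X (m + 1)) := by
  rintro n v ℓ ⟨hv, hE, -⟩
  have hdrop : ∀ i j, (ℓ i).dropLast = (ℓ j).dropLast :=
    hm.label_eq_of_injective hv fun i => ⟨(hE i).1, (hE i).2.1.dropLast, (hE i).2.2.dropLast⟩
  set U := (ℓ 0).dropLast
  have hsplit : ∀ i, ∃ b, ℓ i = U ++ [b] := fun i =>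
    ⟨(ℓ i).getLast fun h => by simpa [h] using (hE i).2.1.1,
      by rw [show U = (ℓ i).dropLast from hdrop 0 i, List.dropLast_append_getLast]⟩
  choose b hb using hsplit
  obtain ⟨hU, hUX, -⟩ := (hE 0).2.1.dropLast
  have hb_eq := (hext U hUX hU).label_eq_of_injective
    (v := fun i => ⟨v i, mem_lang_of_isPrefix (by simp [hb i]) (hE i).2.1.2.2⟩)
    (ℓ := fun i => ⟨b i, hb i ▸ (hE i).2.1.2.1⟩)
    (fun i j h => hv (congrArg Subtype.val h))
    (fun i => ⟨fun h => (hE i).1 (congrArg Subtype.val h),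
      by simpa [extCliques, hb i] using (hE i).2.1.2.2,
      by simpa [extCliques, hb i] using (hE i).2.2.2.2⟩)
  intro i j
  rw [hb i, hb j]
  exact congrArg (fun c => U ++ [c.1]) (hb_eq i j)

end ShiftSpace

theorem stmt_12_general {A : Type*} (X : Set (ℤ → A)) (N : ℕ) :
    (∀ v ∈ lang X, v.length < N → (extGraph (lang X) v).IsAcyclic)
      ↔ ∀ n ≤ N, AcyclicForColoring (GLmem X n) := by
  simp only [extGraph_eq_incidenceGraph, isAcyclic_incidenceGraph_iff]
  constructor
  · intro hext n hn
    induction n with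
    | zero => exact acyclicForColoring_GLmem_zero X
    | succ m ih =>
      exact acyclicForColoring_GLmem_succ (ih (by omega)) fun u hu hlen => hext u hu (by omega)
  · exact fun hG v _ hv => (hG _ hv).extCliques

/-- The extension graph `E_X(v)` is acyclic for every factor `v` of length `< N` if and
only if, for every `n ≤ N`, the graph `G^L_n(X)` is acyclic for the labeling. -/
theorem stmt_12 {A : Type*} [TopologicalSpace A] [DiscreteTopology A]
    (X : Set (ℤ → A)) (hX : IsShiftSpace X) (N : ℕ) :
    (∀ v ∈ lang X, v.length < N → (extGraph (lang X) v).IsAcyclic)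
      ↔ ∀ n ≤ N, AcyclicForColoring (GLmem X n) :=
  stmt_12_general X N
end

section
/- Let σ : A* → A* be a return morphism and ≤ a total order on A. Then there exists a unique total order ⪯ on A such that σ is left order preserving from ⪯ to ≤, i.e., for every s ∈ T^L(σ), the partial map φ^L_{σ,s} is order preserving from ⪯ to ≤. -/
/-- `s` is the longest common suffix of `u` and `v`. -/
def IsLongestCommonSuffix {B : Type*} (s u v : List B) : Prop :=
  s <:+ u ∧ s <:+ v ∧ ∀ t : List B, t <:+ u → t <:+ v → t.length ≤ s.length

/-- `s ∈ T^L(σ)`: `s` is the longest common suffix of `σ(a)` and `σ(b)` for some pair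
of distinct letters `a ≠ b`. -/
def memTL {A B : Type*} (σ : A → List B) (s : List B) : Prop :=
  ∃ a b : A, a ≠ b ∧ IsLongestCommonSuffix s (σ a) (σ b)

/-- `σ` is left order preserving from `r` to `le`: for every `s ∈ T^L(σ)`, the partial
map `φ^L_{σ,s}` (sending `x` with `σ(x) ∈ B* x' s` to `x'`) is order preserving from
the (strict version of the) order `r` to the order `le`. -/
def LeftOrderPreserving {A B : Type*} (σ : A → List B)
    (r : A → A → Prop) (le : B → B → Prop) : Prop :=
  ∀ s : List B, memTL σ s → ∀ x y : A, ∀ x' y' : B, r x y → x ≠ y →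
    (∃ u : List B, σ x = u ++ x' :: s) → (∃ u : List B, σ y = u ++ y' :: s) → le x' y'
/-!
The order is forced. Since `σ(a)w` contains `w` only twice, `σ(A)` is a suffix code, so for
`a ≠ b` the words `σ(a)`, `σ(b)` end in `x s` and `y s` with `x ≠ y`, where `s` is their
longest common suffix. Left order preservation then dictates `a ⪯ b ↔ x ≤ y`, and this is
exactly the lexicographic comparison of `σ(a)` and `σ(b)` read from right to left.
-/

open Function

section Words

variable {B : Type*}

theorem card_le_occCount {u w : List B} {S : Finset ℕ}
    (hS : ∀ i ∈ S, i ≤ w.length ∧ u <+: w.drop i) : S.card ≤ occCount u w := by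
  rw [occCount, ← Set.ncard_coe_finset]
  exact Set.ncard_le_ncard (fun i hi => hS i hi)
    ((Set.finite_Iic w.length).subset fun i hi => hi.1)

/- `w` occurs in `p ++ u ++ w` at positions `0`, `|p|` and `|p ++ u|`, so `p` must be empty. -/
theorem eq_of_suffix_of_occCount_eq_two {u v w : List B} (hu : u ≠ []) (huw : w <+: u ++ w)
    (hvw : w <+: v ++ w) (hocc : occCount w (v ++ w) = 2) (hsuf : u <:+ v) : u = v := by
  obtain ⟨p, rfl⟩ := hsuf
  rcases eq_or_ne p [] with rfl | hp
  · rfl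
  have hp := List.length_pos_iff.2 hp
  have hu := List.length_pos_iff.2 hu
  have hthree : ({0, p.length, (p ++ u).length} : Finset ℕ).card ≤ occCount w (p ++ u ++ w) := by
    refine card_le_occCount ?_
    simp only [Finset.mem_insert, Finset.mem_singleton]
    rintro i (rfl | rfl | rfl)
    · simpa using hvw
    · simpa using huw
    · simp
  rw [Finset.card_eq_three.2 ⟨0, p.length, (p ++ u).length, by simp; omega, by simp; omega,
    by simp; omega, rfl⟩, hocc] at hthree
  omega

theorem exists_eq_append_cons_of_not_prefix :
    ∀ {u v : List B}, ¬ u <+: v → ¬ v <+: u →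
      ∃ p x y u' v', u = p ++ x :: u' ∧ v = p ++ y :: v' ∧ x ≠ y
  | [], _, hu, _ => absurd List.nil_prefix hu
  | _, [], _, hv => absurd List.nil_prefix hv
  | a :: u, b :: v, hu, hv => by
    by_cases hab : a = b
    · subst hab
      obtain ⟨p, x, y, u', v', rfl, rfl, hxy⟩ :=
        exists_eq_append_cons_of_not_prefix (u := u) (v := v)
          (by simpa using hu) (by simpa using hv)
      exact ⟨a :: p, x, y, u', v', rfl, rfl, hxy⟩
    · exact ⟨[], a, b, u, v, rfl, rfl, hab⟩

theorem exists_eq_append_cons_of_not_suffix {u v : List B} (hu : ¬ u <:+ v) (hv : ¬ v <:+ u) :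
    ∃ s x y u' v', u = u' ++ x :: s ∧ v = v' ++ y :: s ∧ x ≠ y := by
  obtain ⟨p, x, y, u', v', hu', hv', hxy⟩ := exists_eq_append_cons_of_not_prefix
    (u := u.reverse) (v := v.reverse) (by simpa using hu) (by simpa using hv)
  refine ⟨p.reverse, x, y, u'.reverse, v'.reverse, ?_, ?_, hxy⟩
  · simpa using congrArg List.reverse hu'
  · simpa using congrArg List.reverse hv'

/- A common suffix longer than `s` would end with both `x :: s` and `y :: s`. -/
theorem isLongestCommonSuffix_of_eq_append_cons {s u v u' v' : List B} {x y : B}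
    (hu : u = u' ++ x :: s) (hv : v = v' ++ y :: s) (hxy : x ≠ y) :
    IsLongestCommonSuffix s u v := by
  subst hu hv
  refine ⟨⟨u' ++ [x], by simp⟩, ⟨v' ++ [y], by simp⟩, fun t htu htv => ?_⟩
  by_contra! hlen
  have hxt := List.suffix_of_suffix_length_le (List.suffix_append u' (x :: s)) htu hlen
  have hyt := List.suffix_of_suffix_length_le (List.suffix_append v' (y :: s)) htv hlen
  have := List.suffix_of_suffix_length_le hxt hyt (by simp)
  exact hxy (List.cons.inj (this.eq_of_length (by simp))).1

end Words

theorem List.append_cons_le_append_cons_iff {B : Type*} [LinearOrder B] (p l₁ l₂ : List B)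
    {x y : B} (hxy : x ≠ y) : p ++ x :: l₁ ≤ p ++ y :: l₂ ↔ x ≤ y := by
  constructor
  · intro h
    by_contra! hyx
    exact (List.append_left_lt (List.Lex.rel hyx : y :: l₂ < x :: l₁)).not_ge h
  · intro h
    exact (List.append_left_lt (List.Lex.rel (lt_of_le_of_ne h hxy) : x :: l₁ < y :: l₂)).le

section ReverseLex

variable {A B : Type*} [LinearOrder B] (σ : A → List B)

def revLex (a b : A) : Prop := (σ a).reverse ≤ (σ b).reverse

variable {σ}

theorem isLinearOrder_revLex (hσ : Injective σ) : IsLinearOrder A (revLex σ) where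
  refl _ := le_rfl
  trans _ _ _ := le_trans
  antisymm _ _ hab hba := hσ (List.reverse_injective (le_antisymm hab hba))
  total _ _ := le_total _ _

theorem revLex_iff {a b : A} {s u v : List B} {x y : B} (ha : σ a = u ++ x :: s)
    (hb : σ b = v ++ y :: s) (hxy : x ≠ y) : revLex σ a b ↔ x ≤ y := by
  simp only [revLex, ha, hb, List.reverse_append, List.reverse_cons, List.append_assoc,
    List.singleton_append]
  exact List.append_cons_le_append_cons_iff _ _ _ hxy

theorem leftOrderPreserving_revLex : LeftOrderPreserving σ (revLex σ) (· ≤ ·) := by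
  rintro s - a b x y hab - ⟨u, ha⟩ ⟨v, hb⟩
  rcases eq_or_ne x y with rfl | hxy
  · exact le_rfl
  · exact (revLex_iff ha hb hxy).1 hab

theorem LeftOrderPreserving.revLex_of_ne {r : A → A → Prop}
    (hr : LeftOrderPreserving σ r (· ≤ ·)) (hσ : ∀ ⦃a b⦄, a ≠ b → ¬ σ a <:+ σ b)
    {a b : A} (hab : a ≠ b) (h : r a b) : revLex σ a b := by
  obtain ⟨s, x, y, u, v, ha, hb, hxy⟩ :=
    exists_eq_append_cons_of_not_suffix (hσ hab) (hσ hab.symm)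
  have hs : memTL σ s := ⟨a, b, hab, isLongestCommonSuffix_of_eq_append_cons ha hb hxy⟩
  exact (revLex_iff ha hb hxy).2 (hr s hs a b x y h hab ⟨u, ha⟩ ⟨v, hb⟩)

end ReverseLex

theorem IsLinearOrder.eq_of_imp {A : Type*} {r r' : A → A → Prop} [IsLinearOrder A r]
    [IsLinearOrder A r'] (h : ∀ a b, a ≠ b → r a b → r' a b) : r = r' := by
  ext a b
  refine ⟨fun hab => ?_, fun hab => ?_⟩
  · rcases eq_or_ne a b with rfl | hne
    · exact refl_of r' a
    · exact h a b hne hab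
  · rcases total_of r a b with hr | hr
    · exact hr
    rcases eq_or_ne a b with rfl | hne
    · exact refl_of r a
    · exact absurd (antisymm_of r' hab (h b a hne.symm hr)) hne

section ReturnMorphism

variable {A B : Type*} {σ : A → List B} {w : List B}

theorem IsReturnMorphism.injective (h : IsReturnMorphism σ w) : Injective σ :=
  fun a b hab => by simpa using @h.2.1 [a] [b] (by simpa using hab)

theorem IsReturnMorphism.not_suffix (h : IsReturnMorphism σ w) ⦃a b : A⦄ (hab : a ≠ b) :
    ¬ σ a <:+ σ b := fun hsuf =>
  hab <| h.injective <| eq_of_suffix_of_occCount_eq_two (h.2.2 a).1 (h.2.2 a).2.1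
    (h.2.2 b).2.1 (h.2.2 b).2.2 hsuf

end ReturnMorphism

/-- For every return morphism `σ : A* → A*` and every total order `≤` on `A`, there is a
unique total order `⪯` on `A` such that `σ` is left order preserving from `⪯` to `≤`. -/
theorem stmt_15 {A : Type*} (σ : A → List A) (w : List A)
    (hret : IsReturnMorphism σ w)
    (le : A → A → Prop) (hle : IsLinearOrder A le) :
    ∃! r : A → A → Prop, IsLinearOrder A r ∧ LeftOrderPreserving σ r le := by
  let _ : LinearOrder A :=
    { le := le
      le_refl := hle.refl
      le_trans := hle.trans
      le_antisymm := hle.antisymm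
      le_total := hle.total
      toDecidableLE := Classical.decRel le }
  have hlin := isLinearOrder_revLex hret.injective
  refine ⟨revLex σ, ⟨hlin, leftOrderPreserving_revLex⟩, ?_⟩
  rintro r ⟨hr, hLOP⟩
  exact IsLinearOrder.eq_of_imp fun _ _ hab => hLOP.revLex_of_ne hret.not_suffix hab
end

section
/- Let X be a minimal dendric shift over A that is planar for (≤^L, ≤^R). Then every sufficiently long left special factor w of X satisfies Card(E^L_X(w)) = 2 and the two letters of E^L_X(w) are consecutive for ≤^L. -/
/-- A minimal shift space: a shift space whose only closed shift-invariant subsets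
are `∅` and itself. -/
def IsMinimal {A : Type*} [TopologicalSpace A] (X : Set (ℤ → A)) : Prop :=
  IsShiftSpace X ∧ ∀ Y : Set (ℤ → A), Y ⊆ X → IsClosed Y → shiftMap '' Y = Y → Y = ∅ ∨ Y = X

/-- The word `v` is planar for the pair of orders `(rL, rR)` with respect to the
language `L`: for all bi-extensions `(a₁, b₁)` and `(a₂, b₂)` of `v`, if `a₁ <L a₂`
then `b₁ ≤R b₂`. -/
def PlanarWord {A : Type*} (L : Set (List A)) (rL rR : A → A → Prop)
    (v : List A) : Prop :=
  ∀ a₁ b₁ a₂ b₂ : A, (a₁ :: (v ++ [b₁])) ∈ L → (a₂ :: (v ++ [b₂])) ∈ L →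
    rL a₁ a₂ → a₁ ≠ a₂ → rR b₁ b₂

/-- `a` and `b` are consecutive for the (total) order `r`. -/
def Consecutive {A : Type*} (r : A → A → Prop) (a b : A) : Prop :=
  r a b ∧ a ≠ b ∧ ∀ c : A, r a c → r c b → c = a ∨ c = b

/-! Minimality and compactness give a bound `R` such that every letter occurs in every window
of length `R` of every point of `X`. Suppose `a <L c <L b` and `aw`, `bw` are factors. Inductively
along `w`, planarity squeezes the right extension following `c` between the common right extension
following `a` and `b`, so every occurrence of `c` is followed by `w`. In a point where `e w` occurs
(`e ∈ {a, b}`), an occurrence of `c` at distance `d ≤ R` to the left of `e` is therefore followed by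
a second copy of `w`: so `w` has period `d` and `e = w[d - 1]`. When `|w| ≥ 2R` the Fine–Wilf
periodicity lemma gives `w[d_a - 1] = w[d_b - 1]`, i.e. `a = b`; thus no letter lies strictly
between two left extensions of a long word. -/

section Words

variable {A : Type*}

def window (x : ℤ → A) (i : ℤ) (n : ℕ) : List A := List.ofFn fun k : Fin n => x (i + k)

@[simp] lemma length_window (x : ℤ → A) (i : ℤ) (n : ℕ) : (window x i n).length = n := by
  simp [window]

lemma getElem?_window (x : ℤ → A) (i : ℤ) {n k : ℕ} (hk : k < n) :
    (window x i n)[k]? = some (x (i + k)) := by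
  simp [window, hk]

lemma window_succ (x : ℤ → A) (i : ℤ) (n : ℕ) : window x i (n + 1) = x i :: window x (i + 1) n := by
  simp only [window, List.ofFn_succ, Fin.val_zero, Nat.cast_zero, add_zero, Fin.val_succ,
    Nat.cast_succ, List.cons.injEq, true_and]
  congr 1
  funext k
  rw [add_comm (k : ℤ), add_assoc]

lemma hasPeriod_window {x : ℤ → A} {i : ℤ} {n d : ℕ} (h : window x (i + d) n = window x i n) :
    (window x i n).HasPeriod d := by
  rw [List.hasPeriod_iff_getElem?]
  intro k hk
  rw [length_window] at hk
  nth_rewrite 1 [← h]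
  rw [getElem?_window x _ (by omega), getElem?_window x _ (by omega)]
  congr 2
  push_cast
  ring

def IsFactorial (L : Set (List A)) : Prop := ∀ u ∈ L, ∀ v, v <:+: u → v ∈ L

lemma window_mem_lang {X : Set (ℤ → A)} {x : ℤ → A} (hx : x ∈ X) (i : ℤ) (n : ℕ) :
    window x i n ∈ lang X :=
  ⟨x, hx, i, fun k => (List.get_ofFn _ k).symm⟩

lemma isFactorial_lang (X : Set (ℤ → A)) : IsFactorial (lang X) := by
  rintro u ⟨x, hx, i, hu⟩ v ⟨s, t, rfl⟩
  refine ⟨x, hx, i + s.length, fun k => ?_⟩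
  have := hu ⟨s.length + k, by simp; omega⟩
  simp only [List.get_eq_getElem] at this ⊢
  rw [List.getElem_append_left (by simp), List.getElem_append_right (Nat.le_add_right _ _)] at this
  simpa [add_assoc] using this

end Words

section ShiftInvariant

variable {A : Type*} {X : Set (ℤ → A)}

lemma comp_add_mem_of_image_shiftMap_eq (hX : shiftMap '' X = X) {x : ℤ → A} (hx : x ∈ X) (m : ℤ) :
    (fun k => x (k + m)) ∈ X := by
  induction m using Int.induction_on with
  | zero => simpa using hx
  | succ i ih =>
    rw [← hX]
    exact ⟨_, ih, funext fun k => by simp only [shiftMap]; ring_nf⟩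
  | pred i ih =>
    rw [← hX] at ih
    obtain ⟨y, hy, hyx⟩ := ih
    convert hy using 1
    funext k
    have := congrFun hyx (k - 1)
    simp only [shiftMap, sub_add_cancel] at this
    rw [this]
    ring_nf

lemma image_shiftMap_sep (hX : shiftMap '' X = X) {P : (ℤ → A) → Prop}
    (hP : ∀ x, P (shiftMap x) ↔ P x) : shiftMap '' {x ∈ X | P x} = {x ∈ X | P x} := by
  ext y
  constructor
  · rintro ⟨x, ⟨hx, hPx⟩, rfl⟩
    exact ⟨hX ▸ Set.mem_image_of_mem shiftMap hx, (hP x).2 hPx⟩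
  · rintro ⟨hy, hPy⟩
    obtain ⟨x, hx, rfl⟩ := hX.symm ▸ hy
    exact ⟨x, ⟨hx, (hP x).1 hPy⟩, rfl⟩

lemma exists_window_eq_of_mem_lang (hX : shiftMap '' X = X) {u : List A} (hu : u ∈ lang X) :
    ∃ x ∈ X, window x 0 u.length = u := by
  obtain ⟨x, hx, i, hxu⟩ := hu
  refine ⟨fun k => x (k + i), comp_add_mem_of_image_shiftMap_eq hX hx i,
    List.ext_get (by simp) fun k _ hk => ?_⟩
  simp only [window, List.get_ofFn, zero_add]
  rw [add_comm]
  exact hxu ⟨k, hk⟩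

end ShiftInvariant

def LettersRecurWithin {A : Type*} (X : Set (ℤ → A)) (R : ℕ) : Prop :=
  ∀ x ∈ X, ∀ (i : ℤ) (a : A), ∃ d : ℕ, 0 < d ∧ d ≤ R ∧ x (i - d) = a

section Recurrence

variable {A : Type*} [TopologicalSpace A] [DiscreteTopology A] {X : Set (ℤ → A)}

lemma IsMinimal.exists_apply_eq (hmin : IsMinimal X) {a : A} (ha : [a] ∈ lang X)
    {x : ℤ → A} (hx : x ∈ X) : ∃ t, x t = a := by
  set Y := {x ∈ X | ∀ t, x t ≠ a}
  have hY : IsClosed Y := by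
    have : Y = X ∩ ⋂ t : ℤ, (fun x : ℤ → A => x t) ⁻¹' {a}ᶜ := by ext; simp [Y]
    rw [this]
    exact hmin.1.2.1.inter (isClosed_iInter fun t =>
      (isClosed_discrete _).preimage (continuous_apply t))
  have hYshift : shiftMap '' Y = Y :=
    image_shiftMap_sep hmin.1.2.2 fun x => ⟨fun h t => by simpa [shiftMap] using h (t - 1),
      fun h t => h (t + 1)⟩
  have hYX : Y ≠ X := by
    obtain ⟨y, hy, i, hya⟩ := ha
    exact fun h => (h ▸ hy : y ∈ Y).2 i (by simpa using hya ⟨0, by simp⟩)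
  rcases hmin.2 Y (fun _ h => h.1) hY hYshift with h | h
  · by_contra! hxa
    exact h.subset ⟨hx, hxa⟩
  · exact absurd h hYX

lemma IsMinimal.exists_lettersRecurWithin [Finite A] (hmin : IsMinimal X)
    (hletters : ∀ a : A, [a] ∈ lang X) : ∃ R, LettersRecurWithin X R := by
  let U : ℕ → Set (ℤ → A) := fun m => {x | ∀ a, ∃ t ∈ Finset.Icc (-(m : ℤ)) m, x t = a}
  have hUopen : ∀ m, IsOpen (U m) := by
    intro m
    have : U m = ⋂ a, ⋃ t ∈ Finset.Icc (-(m : ℤ)) m, (fun x : ℤ → A => x t) ⁻¹' {a} := by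
      ext; simp [U]
    rw [this]
    exact isOpen_iInter_of_finite fun a => isOpen_biUnion fun t _ =>
      (isOpen_discrete _).preimage (continuous_apply t)
  have hcover : X ⊆ ⋃ m, U m := by
    intro x hx
    choose t ht using fun a => hmin.exists_apply_eq (hletters a) hx
    obtain ⟨m, hm⟩ := Finite.exists_le fun a => (t a).natAbs
    exact Set.mem_iUnion.2 ⟨m, fun a => ⟨t a, Finset.mem_Icc.2 (by have := hm a; omega), ht a⟩⟩
  have hmono : Monotone U := fun m m' hmm' x hx a => by
    obtain ⟨t, ht, hxt⟩ := hx a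
    exact ⟨t, Finset.Icc_subset_Icc (by omega) (by omega) ht, hxt⟩
  obtain ⟨m, hm⟩ := hmin.1.2.1.isCompact.elim_directed_cover U hUopen hcover hmono.directed_le
  refine ⟨2 * m + 1, fun x hx i a => ?_⟩
  obtain ⟨t, ht, hxt⟩ := hm (comp_add_mem_of_image_shiftMap_eq hmin.1.2.2 hx (i - m - 1)) a
  rw [Finset.mem_Icc] at ht
  refine ⟨(m + 1 - t).toNat, by omega, by omega, ?_⟩
  rw [← hxt]
  congr 1
  omega

end Recurrence

lemma List.HasPeriod.getElem?_sub_one_eq {α : Type*} {w : List α} {p q : ℕ} (hp : w.HasPeriod p)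
    (hq : w.HasPeriod q) (hp0 : 0 < p) (hq0 : 0 < q) (hlen : p + q ≤ w.length) :
    w[p - 1]? = w[q - 1]? := by
  have hg := hp.gcd hq (by omega)
  rw [← hg.getElem?_mod _ _ _ (by omega), ← hg.getElem?_mod _ (q - 1) _ (by omega)]
  congr 1
  refine Nat.ModEq.add_right_cancel' 1 ?_
  rw [Nat.sub_add_cancel hp0, Nat.sub_add_cancel hq0]
  exact (Nat.modEq_zero_iff_dvd.2 (Nat.gcd_dvd_left p q)).trans
    (Nat.modEq_zero_iff_dvd.2 (Nat.gcd_dvd_right p q)).symm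

lemma exists_consecutive_eq_pair {α : Type*} {r : α → α → Prop} (hr : Std.Total r) {S : Set α}
    (hS : 2 ≤ S.ncard) (hgap : ∀ a ∈ S, ∀ b ∈ S, ∀ c, r a c → r c b → a ≠ c → c ≠ b → a = b) :
    ∃ a b, Consecutive r a b ∧ S = {a, b} := by
  suffices H : ∀ a ∈ S, ∀ b ∈ S, a ≠ b → r a b → ∃ a b, Consecutive r a b ∧ S = {a, b} by
    obtain ⟨a, ha, b, hb, hab⟩ := (Set.one_lt_ncard_iff_nontrivial_and_finite.1 hS).1
    rcases hr.total a b with h | h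
    · exact H a ha b hb hab h
    · exact H b hb a ha hab.symm h
  intro a ha b hb hab hrab
  refine ⟨a, b, ⟨hrab, hab, fun c hac hcb => ?_⟩, ?_⟩
  · by_contra! hc
    exact hab (hgap a ha b hb c hac hcb hc.1.symm hc.2)
  refine (Set.insert_subset_iff.2 ⟨ha, Set.singleton_subset_iff.2 hb⟩).antisymm' fun e he => ?_
  by_contra! he'
  simp only [Set.mem_insert_iff, Set.mem_singleton_iff, not_or] at he'
  obtain ⟨hea, heb⟩ := he'
  rcases hr.total e a with hea' | hae
  · exact heb (hgap e he b hb a hea' hrab hea hab)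
  rcases hr.total e b with heb' | hbe
  · exact hab (hgap a ha b hb e hae heb' (Ne.symm hea) heb)
  · exact hea (hgap a ha e he b hrab hbe hab (Ne.symm heb)).symm

section Planar

variable {A : Type*} {L : Set (List A)} {X : Set (ℤ → A)} {rL rR : A → A → Prop}

lemma PlanarWord.eq_of_between {v : List A} (hv : PlanarWord L rL rR v) (hrR : Std.Antisymm rR)
    {a b c e f : A} (ha : a :: (v ++ [e]) ∈ L) (hb : b :: (v ++ [e]) ∈ L)
    (hc : c :: (v ++ [f]) ∈ L) (hac : rL a c) (hcb : rL c b) (hac' : a ≠ c) (hcb' : c ≠ b) :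
    f = e :=
  hrR.antisymm _ _ (hv c f b e hc hb hcb hcb') (hv a e c f ha hc hac hac')

lemma IsFactorial.isPrefix_of_between (hL : IsFactorial L)
    (hplanar : ∀ v ∈ L, PlanarWord L rL rR v) (hrR : Std.Antisymm rR) {a b c : A} {u : List A}
    (ha : a :: u ∈ L) (hb : b :: u ∈ L) (hac : rL a c) (hcb : rL c b) (hac' : a ≠ c)
    (hcb' : c ≠ b) {v : List A} (hv : c :: v ∈ L) (hlen : v.length ≤ u.length) : v <+: u := by
  induction v using List.reverseRecOn with
  | nil => exact List.nil_prefix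
  | append_singleton v f ih =>
    rw [List.length_append, List.length_singleton] at hlen
    obtain ⟨s, rfl⟩ : v <+: u := ih (hL _ hv _ ⟨[], [f], by simp⟩) (by omega)
    obtain ⟨g, s, rfl⟩ := List.exists_cons_of_length_pos (by simp at hlen; omega : 0 < s.length)
    have hprefix : ∀ d, d :: (v ++ g :: s) ∈ L → d :: (v ++ [g]) ∈ L := fun d hd =>
      hL _ hd _ ⟨[], s, by simp⟩
    have hvL : v ∈ L := hL _ hv _ ⟨[c], [f], by simp⟩
    obtain rfl :=
      (hplanar v hvL).eq_of_between hrR (hprefix a ha) (hprefix b hb) hv hac hcb hac' hcb'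
    exact ⟨s, by simp⟩

lemma exists_hasPeriod_of_cons_mem_lang (hX : shiftMap '' X = X) {R : ℕ}
    (hR : LettersRecurWithin X R)
    {c : A} {w : List A} (hc : ∀ y ∈ X, ∀ i, y i = c → window y (i + 1) w.length = w)
    (hRw : R ≤ w.length) {e : A} (he : e :: w ∈ lang X) :
    ∃ d, 0 < d ∧ d ≤ R ∧ w.HasPeriod d ∧ w[d - 1]? = some e := by
  obtain ⟨z, hz, hze⟩ := exists_window_eq_of_mem_lang hX he
  rw [List.length_cons, window_succ, List.cons.injEq] at hze
  obtain ⟨rfl, hzw⟩ := hze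
  obtain ⟨d, hd0, hdR, hzd⟩ := hR z hz 0 c
  have hw : window z (0 - d + 1) w.length = w := hc z hz _ hzd
  refine ⟨d, hd0, hdR, ?_, ?_⟩
  · rw [← hw]
    apply hasPeriod_window
    rw [hw, show (0 : ℤ) - d + 1 + d = 0 + 1 by ring, hzw]
  · rw [← hw, getElem?_window _ _ (by omega)]
    congr 2
    omega

lemma eq_of_cons_mem_lang_of_between (hX : shiftMap '' X = X)
    (hplanar : ∀ v ∈ lang X, PlanarWord (lang X) rL rR v) (hrR : Std.Antisymm rR) {R : ℕ}
    (hR : LettersRecurWithin X R)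
    {w : List A} (hlen : 2 * R ≤ w.length) {a b c : A} (ha : a :: w ∈ lang X)
    (hb : b :: w ∈ lang X) (hac : rL a c) (hcb : rL c b) (hac' : a ≠ c) (hcb' : c ≠ b) :
    a = b := by
  have hc : ∀ y ∈ X, ∀ i, y i = c → window y (i + 1) w.length = w := by
    intro y hy i hyi
    have hmem : c :: window y (i + 1) w.length ∈ lang X := by
      rw [← hyi, ← window_succ]
      exact window_mem_lang hy _ _
    exact ((isFactorial_lang X).isPrefix_of_between hplanar hrR ha hb hac hcb hac' hcb' hmem
      (by simp)).eq_of_length (by simp)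
  obtain ⟨p, hp0, hpR, hp, hpa⟩ := exists_hasPeriod_of_cons_mem_lang hX hR hc (by omega) ha
  obtain ⟨q, hq0, hqR, hq, hqb⟩ := exists_hasPeriod_of_cons_mem_lang hX hR hc (by omega) hb
  exact Option.some_injective _ (hpa.symm.trans
    ((hp.getElem?_sub_one_eq hq hp0 hq0 (by omega)).trans hqb))

end Planar

theorem stmt_18_general {A : Type*} [Fintype A] [TopologicalSpace A] [DiscreteTopology A]
    (rL rR : A → A → Prop) (hrL : IsLinearOrder A rL) (hrR : IsLinearOrder A rR)
    (X : Set (ℤ → A)) (hmin : IsMinimal X) (hover : ∀ a : A, [a] ∈ lang X)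
    (hplanar : ∀ v ∈ lang X, PlanarWord (lang X) rL rR v) :
    ∃ N : ℕ, ∀ w ∈ lang X, N ≤ w.length →
      2 ≤ ({c : A | c :: w ∈ lang X}).ncard →
      ∃ a b : A, Consecutive rL a b ∧ {c : A | c :: w ∈ lang X} = {a, b} := by
  obtain ⟨R, hR⟩ := hmin.exists_lettersRecurWithin hover
  refine ⟨2 * R, fun w _ hlen hcard => exists_consecutive_eq_pair hrL.toTotal hcard ?_⟩
  exact fun a ha b hb c =>
    eq_of_cons_mem_lang_of_between hmin.1.2.2 hplanar hrR.toAntisymm hR hlen ha hb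

/-- Let `X` be a minimal dendric shift over `A` that is planar for `(≤L, ≤R)`. Then
every sufficiently long left special factor `w` of `X` has exactly two left extensions,
and those two letters are consecutive for `≤L`. -/
theorem stmt_18 {A : Type*} [Fintype A] [TopologicalSpace A] [DiscreteTopology A]
    (rL rR : A → A → Prop) (hrL : IsLinearOrder A rL) (hrR : IsLinearOrder A rR)
    (X : Set (ℤ → A)) (hmin : IsMinimal X) (hover : ∀ a : A, [a] ∈ lang X)
    (hdendric : ∀ v ∈ lang X, (extGraph (lang X) v).IsTree)
    (hplanar : ∀ v ∈ lang X, PlanarWord (lang X) rL rR v) :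
    ∃ N : ℕ, ∀ w ∈ lang X, N ≤ w.length →
      2 ≤ ({c : A | c :: w ∈ lang X}).ncard →
      ∃ a b : A, Consecutive rL a b ∧ {c : A | c :: w ∈ lang X} = {a, b} :=
  stmt_18_general rL rR hrL hrR X hmin hover hplanar
end
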